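/- Every PMV-algebra is an MVW-rig. Precisely: let A be a PMV-algebra (with associative, commutative product). Then for all a, b, c ∈ A: a·0 = 0, a·(b ⊕ c) ≤ a·b ⊕ a·c, and a·b ⊖ a·c ≤ a·(b ⊖ c). -/

import Mathlib

/-- The data of an MV-algebra: a binary sum, a negation and a zero. -/
structure MVData (A : Type*) where
  add : A → A → A
  neg : A → A
  zero : A

namespace MVData

variable {A : Type*} (m : MVData A)

/-- The top element `u = ¬0`. -/
def unit : A := m.neg m.zero

/-- Truncated difference `x ⊖ y = ¬(¬x ⊕ y)`. -/
def ominus (x y : A) : A := m.neg (m.add (m.neg x) y)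

/-- The product `x ⊙ y = ¬(¬x ⊕ ¬y)`. -/
def odot (x y : A) : A := m.neg (m.add (m.neg x) (m.neg y))

/-- The MV order: `x ≤ y` iff `x ⊖ y = 0`. -/
def le (x y : A) : Prop := m.ominus x y = m.zero

/-- The lattice join `x ∨ y = (x ⊖ y) ⊕ y`. -/
def sup (x y : A) : A := m.add (m.ominus x y) y

/-- The lattice meet `x ∧ y = ¬(¬x ∨ ¬y)`. -/
def inf (x y : A) : A := m.neg (m.sup (m.neg x) (m.neg y))

/-- The MV-algebra axioms: `(A, ⊕, 0)` is a commutative monoid and `¬` satisfies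
`¬¬x = x`, `x ⊕ ¬0 = ¬0` and `¬(¬x ⊕ y) ⊕ y = ¬(¬y ⊕ x) ⊕ x`. -/
structure IsMV : Prop where
  add_assoc : ∀ x y z : A, m.add (m.add x y) z = m.add x (m.add y z)
  add_comm : ∀ x y : A, m.add x y = m.add y x
  add_zero : ∀ x : A, m.add x m.zero = x
  neg_neg : ∀ x : A, m.neg (m.neg x) = x
  add_unit : ∀ x : A, m.add x (m.neg m.zero) = m.neg m.zero
  lukasiewicz : ∀ x y : A,
    m.add (m.neg (m.add (m.neg x) y)) y = m.add (m.neg (m.add (m.neg y) x)) x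

end MVData

/-!
Distributivity is only postulated over orthogonal pairs (`a ⊙ b = 0`), but in an MV-algebra every
`x ≤ y` splits orthogonally as `y = (y ⊖ x) ⊕ x`, and `b ⊕ c = b ⊕ ((b ⊕ c) ⊖ b)` with
`(b ⊕ c) ⊖ b ≤ c`. This makes multiplication monotone and subdistributive, and residuation
`x ⊖ z ≤ y ↔ x ≤ y ⊕ z` turns subdistributivity over `b ≤ (b ⊖ c) ⊕ c` into the bound on
`a·b ⊖ a·c`. Finally `a·0` is idempotent (from `0 ⊙ 0 = 0`) and satisfies `a·0 ⊙ a·0 = 0`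
(from the first axiom), which forces `a·0 = 0`.
-/

namespace MVData

variable {A : Type*} {m : MVData A}

namespace IsMV

theorem add_left_comm (h : m.IsMV) (x y z : A) :
    m.add x (m.add y z) = m.add y (m.add x z) := by
  rw [← h.add_assoc, h.add_comm x y, h.add_assoc]

theorem zero_add (h : m.IsMV) (x : A) : m.add m.zero x = x := by
  rw [h.add_comm, h.add_zero]

theorem unit_add (h : m.IsMV) (x : A) : m.add (m.neg m.zero) x = m.neg m.zero := by
  rw [h.add_comm, h.add_unit]

theorem neg_unit (h : m.IsMV) : m.neg (m.neg m.zero) = m.zero := h.neg_neg _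

theorem neg_add_self (h : m.IsMV) (x : A) : m.add (m.neg x) x = m.neg m.zero := by
  have hl := h.lukasiewicz x (m.neg m.zero)
  rw [h.add_unit, h.neg_unit, h.zero_add] at hl
  exact hl.symm

theorem le_iff (h : m.IsMV) {x y : A} : m.le x y ↔ m.add (m.neg x) y = m.neg m.zero := by
  unfold MVData.le MVData.ominus
  constructor
  · intro hxy
    rw [← h.neg_neg (m.add (m.neg x) y), hxy]
  · intro hxy
    rw [hxy, h.neg_unit]

theorem le_of_eq_add (h : m.IsMV) {x y : A} (z : A) (hz : m.add z x = y) : m.le x y := by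
  rw [h.le_iff, ← hz, h.add_left_comm, h.neg_add_self, h.add_unit]

theorem le_add_right (h : m.IsMV) (x y : A) : m.le x (m.add x y) :=
  h.le_of_eq_add y (h.add_comm y x)

theorem le_ominus_add (h : m.IsMV) (x y : A) : m.le x (m.add (m.ominus x y) y) := by
  rw [h.le_iff]
  unfold MVData.ominus
  rw [h.add_left_comm, h.neg_add_self]

theorem ominus_add_cancel (h : m.IsMV) {x y : A} (hxy : m.le x y) :
    m.add (m.ominus y x) x = y := by
  have hl := h.lukasiewicz x y
  have hx : m.neg (m.add (m.neg x) y) = m.zero := hxy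
  rw [hx, h.zero_add] at hl
  exact hl.symm

theorem le_trans (h : m.IsMV) {x y z : A} (hxy : m.le x y) (hyz : m.le y z) : m.le x z :=
  h.le_of_eq_add (m.add (m.ominus z y) (m.ominus y x))
    (by rw [h.add_assoc, h.ominus_add_cancel hxy, h.ominus_add_cancel hyz])

theorem add_le_add_left (h : m.IsMV) {x y : A} (hxy : m.le x y) (w : A) :
    m.le (m.add w x) (m.add w y) :=
  h.le_of_eq_add (m.ominus y x) (by rw [h.add_left_comm, h.ominus_add_cancel hxy])

theorem ominus_le_of_le_add (h : m.IsMV) {x y z : A} (hx : m.le x (m.add y z)) :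
    m.le (m.ominus x z) y := by
  rw [h.le_iff] at hx ⊢
  unfold MVData.ominus
  rwa [h.neg_neg, h.add_assoc, h.add_comm z y]

theorem add_ominus_le (h : m.IsMV) (x y : A) : m.le (m.ominus (m.add x y) x) y :=
  h.ominus_le_of_le_add (h.le_of_eq_add m.zero (by rw [h.zero_add, h.add_comm]))

theorem odot_comm (h : m.IsMV) (x y : A) : m.odot x y = m.odot y x := by
  unfold MVData.odot
  rw [h.add_comm]

theorem odot_assoc (h : m.IsMV) (x y z : A) :
    m.odot (m.odot x y) z = m.odot x (m.odot y z) := by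
  unfold MVData.odot
  rw [h.neg_neg, h.neg_neg, h.add_assoc]

theorem zero_odot (h : m.IsMV) (x : A) : m.odot m.zero x = m.zero := by
  unfold MVData.odot
  rw [h.unit_add, h.neg_unit]

theorem odot_neg_self (h : m.IsMV) (x : A) : m.odot x (m.neg x) = m.zero := by
  unfold MVData.odot
  rw [h.neg_neg, h.neg_add_self, h.neg_unit]

theorem ominus_odot_self (h : m.IsMV) (x y : A) : m.odot (m.ominus y x) x = m.zero := by
  have hsplit : m.ominus y x = m.odot y (m.neg x) := by
    unfold MVData.ominus MVData.odot
    rw [h.neg_neg]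
  rw [hsplit, h.odot_assoc, h.odot_comm (m.neg x), h.odot_neg_self, h.odot_comm, h.zero_odot]

theorem eq_zero_of_add_self_of_odot_self (h : m.IsMV) {x : A}
    (hadd : m.add x x = x) (hodot : m.odot x x = m.zero) : x = m.zero := by
  have hodot' : m.neg (m.add (m.neg x) (m.neg x)) = m.zero := hodot
  have hl := h.lukasiewicz x (m.neg x)
  rw [hodot', h.zero_add, h.neg_neg, hadd, h.neg_add_self] at hl
  rw [← h.neg_neg x, hl, h.neg_unit]

variable {mul : A → A → A}

theorem mul_eq_mul_ominus_add_of_le (h : m.IsMV)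
    (hdist : ∀ a b c : A, m.odot a b = m.zero → mul c (m.add a b) = m.add (mul c a) (mul c b))
    {x y : A} (hxy : m.le x y) (w : A) :
    mul w y = m.add (mul w (m.ominus y x)) (mul w x) := by
  rw [← hdist _ _ w (h.ominus_odot_self x y), h.ominus_add_cancel hxy]

theorem mul_le_mul_left (h : m.IsMV)
    (hdist : ∀ a b c : A, m.odot a b = m.zero → mul c (m.add a b) = m.add (mul c a) (mul c b))
    {x y : A} (hxy : m.le x y) (w : A) : m.le (mul w x) (mul w y) :=
  h.le_of_eq_add _ (h.mul_eq_mul_ominus_add_of_le hdist hxy w).symm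

theorem mul_add_le (h : m.IsMV)
    (hdist : ∀ a b c : A, m.odot a b = m.zero → mul c (m.add a b) = m.add (mul c a) (mul c b))
    (a b c : A) : m.le (mul a (m.add b c)) (m.add (mul a b) (mul a c)) := by
  rw [h.mul_eq_mul_ominus_add_of_le hdist (h.le_add_right b c) a, h.add_comm _ (mul a b)]
  exact h.add_le_add_left (h.mul_le_mul_left hdist (h.add_ominus_le b c) a) (mul a b)

theorem mul_ominus_mul_le (h : m.IsMV)
    (hdist : ∀ a b c : A, m.odot a b = m.zero → mul c (m.add a b) = m.add (mul c a) (mul c b))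
    (a b c : A) : m.le (m.ominus (mul a b) (mul a c)) (mul a (m.ominus b c)) :=
  h.ominus_le_of_le_add <|
    h.le_trans (h.mul_le_mul_left hdist (h.le_ominus_add b c) a) (h.mul_add_le hdist a _ c)

theorem mul_zero (h : m.IsMV) (mul_comm : ∀ a b : A, mul a b = mul b a)
    (hodot : ∀ a b c : A, m.odot a b = m.zero → m.odot (mul a c) (mul b c) = m.zero)
    (hdist : ∀ a b c : A, m.odot a b = m.zero → mul c (m.add a b) = m.add (mul c a) (mul c b))
    (a : A) : mul a m.zero = m.zero := by
  have hzero : m.odot m.zero m.zero = m.zero := h.zero_odot m.zero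
  have hadd := hdist _ _ a hzero
  rw [h.add_zero] at hadd
  have hsq := hodot _ _ a hzero
  rw [mul_comm m.zero a] at hsq
  exact h.eq_zero_of_add_self_of_odot_self hadd.symm hsq

end IsMV

end MVData

theorem pmv_is_mvwrig_general {A : Type*} (m : MVData A) (hmv : m.IsMV)
    (mul : A → A → A)
    (mul_comm : ∀ a b : A, mul a b = mul b a)
    (pmv1 : ∀ a b c : A, m.odot a b = m.zero → m.odot (mul a c) (mul b c) = m.zero)
    (pmv2 : ∀ a b c : A, m.odot a b = m.zero →
      mul c (m.add a b) = m.add (mul c a) (mul c b)) :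
    ∀ a b c : A,
      mul a m.zero = m.zero ∧
      m.le (mul a (m.add b c)) (m.add (mul a b) (mul a c)) ∧
      m.le (m.ominus (mul a b) (mul a c)) (mul a (m.ominus b c)) :=
  fun a b c =>
    ⟨hmv.mul_zero mul_comm pmv1 pmv2 a, hmv.mul_add_le pmv2 a b c,
      hmv.mul_ominus_mul_le pmv2 a b c⟩

/-- Every PMV-algebra is an MVW-rig: if `A` is an MV-algebra with an
associative commutative product such that `a ⊙ b = 0` implies `a·c ⊙ b·c = 0` and
`a ⊙ b = 0` implies `c·(a ⊕ b) = c·a ⊕ c·b`, then for all `a b c`: `a·0 = 0`,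
`a·(b ⊕ c) ≤ a·b ⊕ a·c`, and `a·b ⊖ a·c ≤ a·(b ⊖ c)`. -/
theorem pmv_is_mvwrig {A : Type*} (m : MVData A) (hmv : m.IsMV)
    (mul : A → A → A)
    (mul_assoc : ∀ a b c : A, mul (mul a b) c = mul a (mul b c))
    (mul_comm : ∀ a b : A, mul a b = mul b a)
    (pmv1 : ∀ a b c : A, m.odot a b = m.zero → m.odot (mul a c) (mul b c) = m.zero)
    (pmv2 : ∀ a b c : A, m.odot a b = m.zero →
      mul c (m.add a b) = m.add (mul c a) (mul c b)) :
    ∀ a b c : A,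
      mul a m.zero = m.zero ∧
      m.le (mul a (m.add b c)) (m.add (mul a b) (mul a c)) ∧
      m.le (m.ominus (mul a b) (mul a c)) (mul a (m.ominus b c)) :=
  pmv_is_mvwrig_general m hmv mul mul_comm pmv1 pmv2
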